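/- arXiv:2311.08521 — 6 statements merged into one kernel-verified Lean document; each statement's English description precedes it below -/
import Mathlib

section
/- Every bitstring of length 2k+1 with exactly k ones can be written uniquely as σ^i(y·0), where y is a Dyck word of length 2k, 0 ≤ i < 2k+1, and σ^i denotes cyclic left shift by i positions. -/
/-- A Dyck word of length `2*k`: a bitstring with `k` ones (`true`) and `k` zeros (`false`)
such that every prefix contains at least as many ones as zeros. -/
def IsDyckWord (k : ℕ) (l : List Bool) : Prop :=
  l.length = 2 * k ∧ l.count true = k ∧
    ∀ m : ℕ, (l.take m).count false ≤ (l.take m).count true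

/-!
Let `h j` be the number of zeros minus the number of ones among the first `j` letters of `x`,
so that `h 0 = 0` and `h n = 1` for `n = 2k+1`. A proper prefix of the rotation of `x` starting
at position `r` has excess `h (r + m) - h r` if it does not wrap around, and `1 - h r + h j` if
it wraps around up to position `j < r`. So that rotation has the form `y·0` with `y` a Dyck word
(all its proper prefixes have excess `≤ 0`) exactly when `r` is the first position in `[0, n)`
where `h` attains its maximum (the cycle lemma). Such a position exists and is unique, and
`σ^i` with `i = (n - r) % n` undoes the rotation by `r`.
-/

namespace CycleLemma

def excess (l : List Bool) : ℤ := l.count false - l.count true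

lemma excess_append (a b : List Bool) : excess (a ++ b) = excess a + excess b := by
  simp only [excess, List.count_append]
  push_cast
  ring

lemma excess_take_rotate_of_add_le {x : List Bool} {r m : ℕ} (h : r + m ≤ x.length) :
    excess ((x.rotate r).take m) = excess (x.take (r + m)) - excess (x.take r) := by
  rw [List.rotate_eq_drop_append_take (by omega),
    List.take_append_of_le_length (by rw [List.length_drop]; omega), List.take_add,
    excess_append]
  ring

lemma excess_take_rotate_of_le {x : List Bool} {r j : ℕ} (hj : j ≤ r) (hr : r ≤ x.length) :
    excess ((x.rotate r).take (x.length - r + j)) =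
      excess x - excess (x.take r) + excess (x.take j) := by
  have hsplit : excess x = excess (x.take r) + excess (x.drop r) := by
    rw [← excess_append, List.take_append_drop]
  rw [List.rotate_eq_drop_append_take hr, ← List.length_drop, List.take_length_add_append,
    List.take_take, min_eq_left hj, excess_append, hsplit]
  ring

section FirstMax

variable {α : Type*} [LinearOrder α]

def IsFirstMaxBelow (f : ℕ → α) (n r : ℕ) : Prop :=
  (∀ j < r, f j < f r) ∧ ∀ j, r ≤ j → j < n → f j ≤ f r

lemma exists_isFirstMaxBelow (f : ℕ → α) {n : ℕ} (hn : 0 < n) :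
    ∃ r, r < n ∧ IsFirstMaxBelow f n r := by
  classical
  have hmax : ∃ r, r < n ∧ ∀ j < n, f j ≤ f r := by
    obtain ⟨r, hr, hmax⟩ := (Finset.range n).exists_max_image f ⟨0, Finset.mem_range.2 hn⟩
    exact ⟨r, Finset.mem_range.1 hr, fun j hj => hmax j (Finset.mem_range.2 hj)⟩
  obtain ⟨hrn, hrmax⟩ := Nat.find_spec hmax
  refine ⟨Nat.find hmax, hrn, fun j hj => ?_, fun j _ hjn => hrmax j hjn⟩
  by_contra! hle
  exact Nat.find_min hmax hj ⟨hj.trans hrn, fun i hi => (hrmax i hi).trans hle⟩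

lemma IsFirstMaxBelow.eq {f : ℕ → α} {n r s : ℕ} (hr : IsFirstMaxBelow f n r)
    (hs : IsFirstMaxBelow f n s) (hrn : r < n) (hsn : s < n) : r = s := by
  rcases lt_trichotomy r s with h | h | h
  · exact absurd (hr.2 s h.le hsn) (hs.1 r h).not_ge
  · exact h
  · exact absurd (hs.2 r h.le hrn) (hr.1 s h).not_ge

lemma existsUnique_isFirstMaxBelow (f : ℕ → α) {n : ℕ} (hn : 0 < n) :
    ∃! r, r < n ∧ IsFirstMaxBelow f n r := by
  obtain ⟨r, hrn, hr⟩ := exists_isFirstMaxBelow f hn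
  exact ⟨r, ⟨hrn, hr⟩, fun s ⟨hsn, hs⟩ => hs.eq hr hsn hrn⟩

end FirstMax

lemma forall_excess_take_rotate_nonpos_iff {x : List Bool} (hx : excess x = 1) {r : ℕ}
    (hr : r < x.length) :
    (∀ m < x.length, excess ((x.rotate r).take m) ≤ 0) ↔
      IsFirstMaxBelow (fun j => excess (x.take j)) x.length r := by
  constructor
  · intro h
    refine ⟨fun j hj => ?_, fun j hrj hjn => ?_⟩
    · have hwrap := h (x.length - r + j) (by omega)
      rw [excess_take_rotate_of_le hj.le hr.le, hx] at hwrap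
      dsimp only
      omega
    · have hstay := h (j - r) (by omega)
      rw [excess_take_rotate_of_add_le (by omega), Nat.add_sub_cancel' hrj] at hstay
      dsimp only
      omega
  · rintro ⟨hlt, hle⟩ m hm
    by_cases hstay : r + m < x.length
    · rw [excess_take_rotate_of_add_le hstay.le]
      have := hle (r + m) (by omega) hstay
      dsimp only at this
      omega
    · obtain ⟨j, rfl⟩ : ∃ j, m = x.length - r + j := ⟨m - (x.length - r), by omega⟩
      rw [excess_take_rotate_of_le (by omega) hr.le, hx]
      have := hlt j (by omega)
      dsimp only at this
      omega

theorem existsUnique_rotate_forall_excess_take_nonpos {x : List Bool} (hx : excess x = 1) :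
    ∃! r, r < x.length ∧ ∀ m < x.length, excess ((x.rotate r).take m) ≤ 0 := by
  have hpos : 0 < x.length := List.length_pos_iff.2 (by rintro rfl; simp [excess] at hx)
  refine (existsUnique_congr fun r => and_congr_right fun hr => ?_).2
    (existsUnique_isFirstMaxBelow (fun j => excess (x.take j)) hpos)
  exact forall_excess_take_rotate_nonpos_iff hx hr

lemma exists_isDyckWord_append_false_iff {k : ℕ} {w : List Bool}
    (hlen : w.length = 2 * k + 1) (hones : w.count true = k) :
    (∃ y, IsDyckWord k y ∧ w = y ++ [false]) ↔ ∀ m < w.length, excess (w.take m) ≤ 0 := by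
  constructor
  · rintro ⟨y, ⟨hy, -, hprefix⟩, rfl⟩ m hm
    rw [List.take_append_of_le_length (by simp at hm; omega)]
    have := hprefix m
    simp only [excess]
    omega
  · intro h
    obtain ⟨y, b, rfl⟩ := w.eq_nil_or_concat'.resolve_left (by rintro rfl; simp at hlen)
    have hy : y.length = 2 * k := by simpa using hlen
    have hprefix : ∀ m, excess (y.take m) ≤ 0 := fun m => by
      rw [List.take_eq_take_min, ← List.take_append_of_le_length (l₂ := [b]) (min_le_right _ _)]
      exact h _ (by simp)
    have hcount := y.count_true_add_count_false
    have hy_excess := hprefix y.length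
    rw [List.take_length] at hy_excess
    cases b
    · refine ⟨y, ⟨hy, by simpa using hones, fun m => ?_⟩, rfl⟩
      have := hprefix m
      simp only [excess] at this
      omega
    · -- a final one would leave `y` with `k - 1` ones, hence excess `2`
      simp [excess] at hones hy_excess
      omega

lemma sub_mod_sub_mod_of_lt {n i : ℕ} (hi : i < n) : (n - (n - i) % n) % n = i := by
  rcases Nat.eq_zero_or_pos i with rfl | hpos
  · simp
  · rw [Nat.mod_eq_of_lt (by omega : n - i < n), Nat.sub_sub_self hi.le, Nat.mod_eq_of_lt hi]

lemma eq_rotate_iff_rotate_eq {α : Type*} {l l' : List α} {n i : ℕ} (hl' : l'.length = n)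
    (hi : i < n) : l = l'.rotate i ↔ l.rotate ((n - i) % n) = l' := by
  rw [List.rotate_eq_iff, hl', Nat.mod_mod, ← List.rotate_mod l' (n - _), hl',
    sub_mod_sub_mod_of_lt hi]

theorem existsUnique_rotate_eq_isDyckWord_append_false {k : ℕ} {x : List Bool}
    (hlen : x.length = 2 * k + 1) (hones : x.count true = k) :
    ∃! r, r < 2 * k + 1 ∧ ∃ y, IsDyckWord k y ∧ x.rotate r = y ++ [false] := by
  have hx : excess x = 1 := by
    have := x.count_true_add_count_false
    simp only [excess]
    omega
  rw [← hlen]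
  refine (existsUnique_congr fun r => and_congr_right fun _ => ?_).2
    (existsUnique_rotate_forall_excess_take_nonpos hx)
  rw [← List.length_rotate x r]
  exact exists_isDyckWord_append_false_iff (by simp [hlen])
    (by rw [(x.rotate_perm r).count_eq, hones])

end CycleLemma

open CycleLemma in
/-- Every bitstring of length `2*k+1` with exactly `k` ones is uniquely `σ^i(y·0)` with
`y` a Dyck word of length `2*k` and `0 ≤ i < 2*k+1`; `σ^i` is cyclic left shift
(`List.rotate`). -/
theorem unique_dyck_rotation (k : ℕ) (x : List Bool)
    (hlen : x.length = 2 * k + 1) (hones : x.count true = k) :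
    ∃! p : List Bool × ℕ, p.2 < 2 * k + 1 ∧ IsDyckWord k p.1 ∧
      x = (p.1 ++ [false]).rotate p.2 := by
  obtain ⟨r, ⟨hr, y, hy, hxy⟩, huniq⟩ :=
    existsUnique_rotate_eq_isDyckWord_append_false hlen hones
  have hlen' : ∀ y' : List Bool, IsDyckWord k y' → (y' ++ [false]).length = 2 * k + 1 :=
    fun y' hy' => by simp [hy'.1]
  refine ⟨(y, (2 * k + 1 - r) % (2 * k + 1)), ⟨Nat.mod_lt _ (by omega), hy, ?_⟩, ?_⟩
  · rwa [eq_rotate_iff_rotate_eq (hlen' y hy) (Nat.mod_lt _ (by omega)),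
      sub_mod_sub_mod_of_lt hr]
  rintro ⟨y', i⟩ ⟨hi, hy', hxy'⟩
  rw [eq_rotate_iff_rotate_eq (hlen' y' hy') hi] at hxy'
  have hr' : (2 * k + 1 - i) % (2 * k + 1) = r :=
    huniq _ ⟨Nat.mod_lt _ (by omega), y', hy', hxy'⟩
  rw [hr'] at hxy'
  rw [← hr', sub_mod_sub_mod_of_lt hi, List.append_cancel_right (hxy'.symm.trans hxy)]
end

section
/- Chung-Feller theorem: For each e with 0 ≤ e ≤ k, the number of bitstrings of length 2k with exactly k ones having exactly e flaws equals the Catalan number C_k, independently of e. -/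
/-- The number of flaws of a bitstring: the number of prefixes ending with a zero (`false`)
that contain strictly fewer ones than zeros. -/
def flaws (l : List Bool) : ℕ :=
  ((Finset.range l.length).filter fun m =>
    l.getD m true = false ∧ (l.take (m + 1)).count true < (l.take (m + 1)).count false).card

/-!
Read a bitstring as a lattice path, `1` an up-step and `0` a down-step, so that a flaw is a
down-step ending below the axis. A nonempty balanced path splits uniquely at its first return to
the axis, either as `1 a 0 b` with `a` never below the axis, or as `0 a 1 b` with `a` never above
it. A block of the first kind has no flaw; in one of the second kind all `j + 1` down-steps are
flaws, where `a` has length `2j`. The admissible `a` are exactly `L_j^0` and `L_j^j`, both of size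
`C_j` by induction, so
`|L_{k+1}^e| = ∑_{j ≤ k - e} C_j C_{k-j} + ∑_{j < e} C_j C_{k-j}`,
and reflecting `j ↦ k - j` in the first sum turns this into the Catalan recurrence.
-/

lemma List.append_cons_eq_append_cons {α : Type*} {a a' b b' : List α} {x : α}
    (h : a ++ x :: b = a' ++ x :: b') :
    (a = a' ∧ b = b') ∨ (∃ r, a' = a ++ x :: r) ∨ (∃ r, a = a' ++ x :: r) := by
  rcases List.append_eq_append_iff.mp h with ⟨_ | ⟨y, r⟩, rfl, h⟩ | ⟨_ | ⟨y, r⟩, rfl, h⟩ <;>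
    simp_all

namespace ChungFeller

open Finset

def height (l : List Bool) : ℤ := l.count true - l.count false

@[simp] lemma height_nil : height [] = 0 := by simp [height]

@[simp] lemma height_cons (b : Bool) (l : List Bool) :
    height (b :: l) = height l + if b then 1 else -1 := by
  cases b <;> simp [height] <;> ring

@[simp] lemma height_append (l₁ l₂ : List Bool) : height (l₁ ++ l₂) = height l₁ + height l₂ := by
  simp [height, List.count_append]; ring

lemma count_false_eq_of_height_eq_zero {l : List Bool} {k : ℕ} (hlen : l.length = 2 * k)
    (h : height l = 0) : l.count false = k := by
  have := List.count_true_add_count_false l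
  simp only [height] at h; omega

lemma length_eq_two_mul_count_true {l : List Bool} (h : height l = 0) :
    l.length = 2 * l.count true := by
  have := List.count_true_add_count_false l
  simp only [height] at h; omega

/-- The number of flaws of `l` read as a path that starts at height `d`. -/
def flawsFrom : ℤ → List Bool → ℕ
  | _, [] => 0
  | d, true :: l => flawsFrom (d + 1) l
  | d, false :: l => (if d ≤ 0 then 1 else 0) + flawsFrom (d - 1) l

lemma card_filter_flaw_eq_flawsFrom (l : List Bool) (d : ℤ) :
    #{m ∈ range l.length | l.getD m true = false ∧ d + height (l.take (m + 1)) < 0} =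
      flawsFrom d l := by
  induction l generalizing d with
  | nil => simp [flawsFrom]
  | cons b l ih =>
    rw [card_filter, List.length_cons, sum_range_succ', ← card_filter, add_comm]
    cases b
    · rw [flawsFrom, ← ih]
      congr 1
      · simp [Int.lt_iff_add_one_le]
      · congr 1; apply filter_congr; intro m _; simp; omega
    · rw [flawsFrom, ← ih, if_neg (by simp), zero_add]
      congr 1; apply filter_congr; intro m _; simp; omega

lemma flaws_eq_flawsFrom (l : List Bool) : flaws l = flawsFrom 0 l := by
  rw [← card_filter_flaw_eq_flawsFrom, flaws]
  simp only [height, zero_add, sub_neg, Nat.cast_lt]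

lemma flawsFrom_append (d : ℤ) (a b : List Bool) :
    flawsFrom d (a ++ b) = flawsFrom d a + flawsFrom (d + height a) b := by
  induction a generalizing d with
  | nil => simp [flawsFrom]
  | cons x a ih => cases x <;> simp only [flawsFrom, List.cons_append, ih, height_cons] <;> grind

lemma flawsFrom_le_count_false (d : ℤ) (l : List Bool) : flawsFrom d l ≤ l.count false := by
  induction l generalizing d with
  | nil => simp [flawsFrom]
  | cons x l ih => cases x <;> simp only [flawsFrom, List.count_cons] <;> grind

lemma flawsFrom_antitone (l : List Bool) : Antitone fun d => flawsFrom d l := by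
  induction l with
  | nil => simp [flawsFrom, Antitone]
  | cons x l ih =>
    intro d d' h
    cases x
    · have : flawsFrom (d' - 1) l ≤ flawsFrom (d - 1) l := ih (show d - 1 ≤ d' - 1 by omega)
      simp only [flawsFrom]; split_ifs <;> omega
    · exact ih (show d + 1 ≤ d' + 1 by omega)

lemma flawsFrom_lt_count_false {d : ℤ} (hd : 0 < d) {l : List Bool} (hl : d + height l ≤ 0) :
    flawsFrom d l < l.count false := by
  induction l generalizing d with
  | nil => simp at hl; omega
  | cons x l ih =>
    cases x
    · have := flawsFrom_le_count_false (d - 1) l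
      simp [flawsFrom, not_le.mpr hd]; omega
    · simp only [height_cons, if_true] at hl
      exact ih (by omega) (by omega)

lemma exists_eq_append_false_cons {d : ℤ} (hd : 0 ≤ d) {l : List Bool} (hl : d + height l < 0) :
    ∃ a b, l = a ++ false :: b ∧ d + height a = 0 ∧ flawsFrom d a = 0 := by
  induction l generalizing d with
  | nil => simp at hl; omega
  | cons x l ih =>
    cases x
    · rcases hd.eq_or_lt with rfl | hd
      · exact ⟨[], l, rfl, by simp, rfl⟩
      · obtain ⟨a, b, rfl, ha, hfa⟩ := ih (d := d - 1) (by omega) (by simp at hl; omega)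
        exact ⟨false :: a, b, rfl, by simp; omega, by simp [flawsFrom, hfa]; omega⟩
    · obtain ⟨a, b, rfl, ha, hfa⟩ := ih (d := d + 1) (by omega) (by simp at hl; omega)
      exact ⟨true :: a, b, rfl, by simp; omega, by simp [flawsFrom, hfa]⟩

lemma exists_eq_append_true_cons {d : ℤ} (hd : d ≤ 0) {l : List Bool} (hl : 0 < d + height l) :
    ∃ a b, l = a ++ true :: b ∧ d + height a = 0 ∧ flawsFrom d a = a.count false := by
  induction l generalizing d with
  | nil => simp at hl; omega
  | cons x l ih =>
    cases x
    · obtain ⟨a, b, rfl, ha, hfa⟩ := ih (d := d - 1) (by omega) (by simp at hl; omega)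
      exact ⟨false :: a, b, rfl, by simp; omega, by simp [flawsFrom, hfa, hd]; omega⟩
    · rcases hd.eq_or_lt with rfl | hd
      · exact ⟨[], l, rfl, by simp, rfl⟩
      · obtain ⟨a, b, rfl, ha, hfa⟩ := ih (d := d + 1) (by omega) (by simp at hl; omega)
        exact ⟨true :: a, b, rfl, by simp; omega, by simp [flawsFrom, hfa]⟩

lemma eq_of_append_false_cons_eq {a a' b b' : List Bool} (h : a ++ false :: b = a' ++ false :: b')
    (ha : height a = 0) (ha' : height a' = 0) (hfa : flawsFrom 0 a = 0)
    (hfa' : flawsFrom 0 a' = 0) :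
    a = a' ∧ b = b' := by
  have flaw_of_prefix : ∀ {p r : List Bool}, height p = 0 → flawsFrom 0 (p ++ false :: r) ≠ 0 := by
    intro p r hp
    simp [flawsFrom_append, hp, flawsFrom]
  rcases List.append_cons_eq_append_cons h with h | ⟨r, rfl⟩ | ⟨r, rfl⟩
  · exact h
  · exact absurd hfa' (flaw_of_prefix ha)
  · exact absurd hfa (flaw_of_prefix ha')

lemma eq_of_append_true_cons_eq {a a' b b' : List Bool} (h : a ++ true :: b = a' ++ true :: b')
    (ha : height a = 0) (ha' : height a' = 0)
    (hfa : flawsFrom 0 a = a.count false) (hfa' : flawsFrom 0 a' = a'.count false) :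
    a = a' ∧ b = b' := by
  have no_flaw_of_prefix : ∀ {p r : List Bool}, height p = 0 → height (p ++ true :: r) = 0 →
      flawsFrom 0 (p ++ true :: r) ≠ (p ++ true :: r).count false := by
    intro p r hp hpr
    have := flawsFrom_le_count_false 0 p
    have := flawsFrom_lt_count_false (d := 1) one_pos (l := r) (by simp [hp] at hpr; omega)
    simp [flawsFrom_append, hp, flawsFrom, List.count_append]
    omega
  rcases List.append_cons_eq_append_cons h with h | ⟨r, rfl⟩ | ⟨r, rfl⟩
  · exact h
  · exact absurd hfa' (no_flaw_of_prefix ha ha')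
  · exact absurd hfa (no_flaw_of_prefix ha' ha)

lemma flawsFrom_true_cons_append_false_cons {a : List Bool} (ha : height a = 0)
    (hfa : flawsFrom 0 a = 0) (b : List Bool) :
    flawsFrom 0 (true :: (a ++ false :: b)) = flawsFrom 0 b := by
  have : flawsFrom 1 a ≤ flawsFrom 0 a := flawsFrom_antitone a zero_le_one
  simp [flawsFrom, flawsFrom_append, ha]
  omega

lemma flawsFrom_false_cons_append_true_cons {a : List Bool} (ha : height a = 0)
    (hfa : flawsFrom 0 a = a.count false) (b : List Bool) :
    flawsFrom 0 (false :: (a ++ true :: b)) = a.count false + 1 + flawsFrom 0 b := by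
  have : flawsFrom 0 a ≤ flawsFrom (-1) a := flawsFrom_antitone a (by norm_num)
  have := flawsFrom_le_count_false (-1) a
  simp [flawsFrom, flawsFrom_append, ha]
  omega

/-- The set `L_k^e`. -/
noncomputable def words (k e : ℕ) : Finset (List Bool) :=
  {l ∈ (List.finite_length_eq Bool (2 * k)).toFinset | height l = 0 ∧ flawsFrom 0 l = e}

lemma mem_words {k e : ℕ} {l : List Bool} :
    l ∈ words k e ↔ l.length = 2 * k ∧ height l = 0 ∧ flawsFrom 0 l = e := by
  simp [words]

lemma words_eq_empty {k e : ℕ} (h : k < e) : words k e = ∅ := by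
  refine eq_empty_of_forall_notMem fun l hl => ?_
  obtain ⟨hlen, hh, rfl⟩ := mem_words.mp hl
  have := flawsFrom_le_count_false 0 l
  rw [count_false_eq_of_height_eq_zero hlen hh] at this
  omega

lemma true_cons_mem_words_succ {k e : ℕ} {l : List Bool} :
    true :: l ∈ words (k + 1) e ↔
      ∃ j ≤ k, ∃ a ∈ words j 0, ∃ b ∈ words (k - j) e, l = a ++ false :: b := by
  simp only [mem_words]
  constructor
  · rintro ⟨hlen, hh, hf⟩
    simp only [height_cons, if_true] at hh
    obtain ⟨a, b, rfl, ha, hfa⟩ := exists_eq_append_false_cons le_rfl (l := l) (by omega)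
    rw [zero_add] at ha
    have := length_eq_two_mul_count_true ha
    simp only [List.length_cons, List.length_append, height_append, height_cons, ha,
      Bool.false_eq_true, if_false] at hlen hh
    rw [flawsFrom_true_cons_append_false_cons ha hfa] at hf
    exact ⟨a.count true, by omega, a, ⟨this, ha, hfa⟩, b, ⟨by omega, by omega, hf⟩, rfl⟩
  · rintro ⟨j, hj, a, ⟨hla, ha, hfa⟩, b, ⟨hlb, hb, hfb⟩, rfl⟩
    rw [flawsFrom_true_cons_append_false_cons ha hfa]
    simp [ha, hb, hfb]
    omega

lemma false_cons_mem_words_succ {k e : ℕ} {l : List Bool} :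
    false :: l ∈ words (k + 1) e ↔
      ∃ j ≤ k, j < e ∧ ∃ a ∈ words j j, ∃ b ∈ words (k - j) (e - 1 - j), l = a ++ true :: b := by
  simp only [mem_words]
  constructor
  · rintro ⟨hlen, hh, hf⟩
    simp only [height_cons, Bool.false_eq_true, if_false] at hh
    obtain ⟨a, b, rfl, ha, hfa⟩ := exists_eq_append_true_cons le_rfl (l := l) (by omega)
    rw [zero_add] at ha
    have := length_eq_two_mul_count_true ha
    have hca : a.count false = a.count true := by simp only [height] at ha; omega
    simp only [List.length_cons, List.length_append, height_append, height_cons, ha,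
      if_true] at hlen hh
    rw [flawsFrom_false_cons_append_true_cons ha hfa] at hf
    exact ⟨a.count true, by omega, by omega, a, ⟨this, ha, by omega⟩, b,
      ⟨by omega, by omega, by omega⟩, rfl⟩
  · rintro ⟨j, hj, hje, a, ⟨hla, ha, hfa⟩, b, ⟨hlb, hb, hfb⟩, rfl⟩
    have hca := count_false_eq_of_height_eq_zero hla ha
    rw [flawsFrom_false_cons_append_true_cons ha (hfa.trans hca.symm)]
    simp [ha, hb, hfb]
    omega

lemma words_succ (k e : ℕ) : words (k + 1) e =
    ((range (k + 1)).sigma fun j => words j 0 ×ˢ words (k - j) e).image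
        (fun s => true :: (s.2.1 ++ false :: s.2.2)) ∪
      ({j ∈ range (k + 1) | j < e}.sigma fun j => words j j ×ˢ words (k - j) (e - 1 - j)).image
        (fun s => false :: (s.2.1 ++ true :: s.2.2)) := by
  ext (_ | ⟨_ | _, l⟩)
  · simp [mem_words]
  · simp [false_cons_mem_words_succ, and_assoc, eq_comm]
  · simp [true_cons_mem_words_succ, and_assoc, eq_comm]

lemma card_words_succ (k e : ℕ) : #(words (k + 1) e) =
    ∑ j ∈ range (k + 1), #(words j 0) * #(words (k - j) e) +
      ∑ j ∈ range (k + 1) with j < e, #(words j j) * #(words (k - j) (e - 1 - j)) := by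
  rw [words_succ, card_union_of_disjoint, card_image_of_injOn, card_image_of_injOn, card_sigma,
    card_sigma]
  · simp only [card_product]
  · rintro ⟨j, a, b⟩ hs ⟨j', a', b'⟩ hs' h
    simp only [coe_sigma, Set.mem_sigma_iff, coe_product, Set.mem_prod, mem_coe, mem_words,
      List.cons.injEq, true_and] at hs hs' h
    obtain ⟨-, ⟨hla, ha, hfa⟩, -⟩ := hs
    obtain ⟨-, ⟨hla', ha', hfa'⟩, -⟩ := hs'
    obtain ⟨rfl, rfl⟩ := eq_of_append_true_cons_eq h ha ha'
      (hfa.trans (count_false_eq_of_height_eq_zero hla ha).symm)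
      (hfa'.trans (count_false_eq_of_height_eq_zero hla' ha').symm)
    obtain rfl : j = j' := by omega
    rfl
  · rintro ⟨j, a, b⟩ hs ⟨j', a', b'⟩ hs' h
    simp only [coe_sigma, Set.mem_sigma_iff, coe_product, Set.mem_prod, mem_coe, mem_words,
      List.cons.injEq, true_and] at hs hs' h
    obtain ⟨-, ⟨hla, ha, hfa⟩, -⟩ := hs
    obtain ⟨-, ⟨hla', ha', hfa'⟩, -⟩ := hs'
    obtain ⟨rfl, rfl⟩ := eq_of_append_false_cons_eq h ha ha' hfa hfa'
    obtain rfl : j = j' := by omega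
    rfl
  · simp only [disjoint_left, mem_image]
    rintro _ ⟨_, _, rfl⟩ ⟨_, _, h⟩
    cases h

lemma sum_filter_add_sum_filter_eq_catalan_succ (k e : ℕ) :
    ∑ j ∈ range (k + 1) with e ≤ k - j, catalan j * catalan (k - j) +
      ∑ j ∈ range (k + 1) with j < e, catalan j * catalan (k - j) = catalan (k + 1) := by
  have reflect : ∑ j ∈ range (k + 1) with e ≤ k - j, catalan j * catalan (k - j) =
      ∑ j ∈ range (k + 1) with ¬j < e, catalan j * catalan (k - j) := by
    rw [sum_filter, sum_filter, ← sum_range_reflect]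
    refine sum_congr rfl fun j hj => ?_
    rw [mem_range] at hj
    rw [show k + 1 - 1 - j = k - j by omega, show k - (k - j) = j by omega, mul_comm]
    simp only [not_lt]
  rw [reflect, add_comm, sum_filter_add_sum_filter_not, catalan_succ]
  exact (Fin.sum_univ_eq_sum_range (fun j => catalan j * catalan (k - j)) _).symm

lemma coe_words (k e : ℕ) : (words k e : Set (List Bool)) =
    {l : List Bool | l.length = 2 * k ∧ l.count true = k ∧ flaws l = e} := by
  ext l
  have := List.count_true_add_count_false l
  simp only [mem_coe, mem_words, Set.mem_ofPred_eq, flaws_eq_flawsFrom, height]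
  omega

theorem card_words {k e : ℕ} (he : e ≤ k) : #(words k e) = catalan k := by
  induction k using Nat.strong_induction_on generalizing e with
  | _ k ih =>
  cases k with
  | zero =>
    obtain rfl : e = 0 := by omega
    rw [catalan_zero, card_eq_one]
    refine ⟨[], ext fun l => ?_⟩
    simp only [mem_words, mul_zero, List.length_eq_zero_iff, mem_singleton, and_iff_left_iff_imp]
    rintro rfl
    simp [flawsFrom]
  | succ k =>
    have card_left : ∀ j ∈ range (k + 1), #(words j 0) * #(words (k - j) e) =
        if e ≤ k - j then catalan j * catalan (k - j) else 0 := by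
      intro j hj
      rw [mem_range] at hj
      split_ifs with hjk
      · rw [ih j (by omega) (Nat.zero_le j), ih (k - j) (by omega) hjk]
      · rw [words_eq_empty (k := k - j) (by omega), card_empty, mul_zero]
    have card_right : ∀ j ∈ {j ∈ range (k + 1) | j < e},
        #(words j j) * #(words (k - j) (e - 1 - j)) = catalan j * catalan (k - j) := by
      intro j hj
      rw [mem_filter, mem_range] at hj
      rw [ih j (by omega) le_rfl, ih (k - j) (by omega) (by omega)]
    rw [card_words_succ, sum_congr rfl card_left, sum_congr rfl card_right, ← sum_filter,
      sum_filter_add_sum_filter_eq_catalan_succ]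

end ChungFeller

/-- Chung-Feller theorem: for each `0 ≤ e ≤ k`, the number of bitstrings of length `2*k`
with exactly `k` ones and exactly `e` flaws is the Catalan number `C_k`. -/
theorem chung_feller (k e : ℕ) (he : e ≤ k) :
    {l : List Bool | l.length = 2 * k ∧ l.count true = k ∧ flaws l = e}.ncard =
      (2 * k).choose k / (k + 1) := by
  rw [← ChungFeller.coe_words, Set.ncard_coe_finset, ChungFeller.card_words he,
    catalan_eq_centralBinom_div, Nat.centralBinom]
end

section
/- The map f sending x = σ^i(y·0) to σ^i(y·1), where y is a Dyck word of length 2k and 0 ≤ i < 2k+1, is a bijection from the set of bitstrings of length 2k+1 with k ones to the set of bitstrings of length 2k+1 with k+1 ones. -/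
namespace KTaux

lemma count_add_length (l : List Bool) : l.count true + l.count false = l.length := by
  induction l with
  | nil => simp
  | cons a l ih => cases a <;> simp [List.count_cons] <;> omega

/-- counts of a prefix of a rotation, non-wrapping case -/
lemma count_rot_le {x : List Bool} {j m : ℕ} (hj : j ≤ x.length) (hm : j + m ≤ x.length)
    (b : Bool) :
    (x.take j).count b + ((x.rotate j).take m).count b = (x.take (j + m)).count b := by
  rw [List.rotate_eq_drop_append_take hj, List.take_append]
  have h2 : m - (x.drop j).length = 0 := by simp; omega
  rw [h2, List.take_zero, List.append_nil, List.take_drop]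
  conv_rhs => rw [← List.take_append_drop j (x.take (j + m))]
  rw [List.count_append, List.take_take, min_eq_left (by omega)]

/-- counts of a prefix of a rotation, wrapping case -/
lemma count_rot_gt {x : List Bool} {j m : ℕ} (hj : j ≤ x.length) (hm : m ≤ x.length)
    (hw : x.length ≤ j + m) (b : Bool) :
    ((x.rotate j).take m).count b + (x.take j).count b
      = x.count b + (x.take (j + m - x.length)).count b := by
  rw [List.rotate_eq_drop_append_take hj, List.take_append]
  have h1 : (x.drop j).take m = x.drop j := List.take_of_length_le (by simp; omega)
  have h2 : (x.take j).take (m - (x.drop j).length) = x.take (j + m - x.length) := by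
    rw [List.take_take, List.length_drop, min_eq_left (by omega)]
    congr 1; omega
  rw [h1, h2, List.count_append]
  have hxc : x.count b = (x.take j).count b + (x.drop j).count b := by
    rw [← List.count_append, List.take_append_drop]
  omega

variable (k : ℕ) (x : List Bool)

/-- rotation `j` of `x` has all proper prefixes with at least as many trues as falses -/
def Good (j : ℕ) : Prop :=
  ∀ m < 2 * k + 1, ((x.rotate j).take m).count false ≤ ((x.rotate j).take m).count true

/-- prefix-sum function -/
noncomputable def g (t : ℕ) : ℤ := ((x.take t).count true : ℤ) - (x.take t).count false

variable {k x}

section cycle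

variable (hl : x.length = 2 * k + 1) (hc : x.count true = k)
include hl hc

lemma count_false_x : x.count false = k + 1 := by have := count_add_length x; omega

omit hc in
lemma g_zero : g x 0 = 0 := by simp [g]

lemma g_total : g x (2 * k + 1) = -1 := by
  have h1 : x.take (2 * k + 1) = x := List.take_of_length_le (by omega)
  have := count_false_x hl hc
  simp [g, h1, hc, this]

omit hc in
lemma good_iff_le {j m : ℕ} (hj : j ≤ 2 * k + 1) (hm : j + m ≤ 2 * k + 1) :
    (((x.rotate j).take m).count false ≤ ((x.rotate j).take m).count true)
      ↔ g x j ≤ g x (j + m) := by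
  have ht := count_rot_le (x := x) (j := j) (m := m) (by omega) (by omega) true
  have hf := count_rot_le (x := x) (j := j) (m := m) (by omega) (by omega) false
  simp only [g]; omega

lemma good_iff_gt {j m : ℕ} (hj : j ≤ 2 * k + 1) (hm : m ≤ 2 * k + 1)
    (hw : 2 * k + 1 ≤ j + m) :
    (((x.rotate j).take m).count false ≤ ((x.rotate j).take m).count true)
      ↔ g x j + 1 ≤ g x (j + m - (2 * k + 1)) := by
  have ht := count_rot_gt (x := x) (j := j) (m := m) (by omega) (by omega) (by omega) true
  have hf := count_rot_gt (x := x) (j := j) (m := m) (by omega) (by omega) (by omega) false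
  have hcf := count_false_x hl hc
  rw [hl] at ht hf
  simp only [g]
  omega

omit hc in
/-- From Good j, the non-wrap consequence. -/
lemma good_mono {j : ℕ} (hj : j < 2 * k + 1) (hg : Good k x j) {t : ℕ}
    (h1 : j ≤ t) (h2 : t ≤ 2 * k + 1) (h3 : ¬(j = 0 ∧ t = 2 * k + 1)) :
    g x j ≤ g x t := by
  have hm : t - j < 2 * k + 1 := by omega
  have := (good_iff_le hl (j := j) (m := t - j) (by omega) (by omega)).mp (hg _ hm)
  have e : j + (t - j) = t := by omega
  rwa [e] at this

/-- From Good j, the wrap consequence. -/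
lemma good_wrap {j : ℕ} (hj : j < 2 * k + 1) (hg : Good k x j) {t : ℕ}
    (h1 : 1 ≤ t) (h2 : t < j) :
    g x j + 1 ≤ g x t := by
  have hm : 2 * k + 1 + t - j < 2 * k + 1 := by omega
  have := (good_iff_gt hl hc (j := j) (m := 2 * k + 1 + t - j) (by omega) (by omega)
    (by omega)).mp (hg _ hm)
  have e : j + (2 * k + 1 + t - j) - (2 * k + 1) = t := by omega
  rwa [e] at this

/-- Uniqueness part of the cycle lemma. -/
lemma good_unique {j j' : ℕ} (hj : j < 2 * k + 1) (hj' : j' < 2 * k + 1)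
    (hg : Good k x j) (hg' : Good k x j') : j = j' := by
  have key : ∀ ja jb, ja < jb → jb < 2 * k + 1 → Good k x ja → Good k x jb → False := by
    intro ja jb hab hb ha hbgood
    have h1 : g x ja ≤ g x jb :=
      good_mono hl (by omega) ha (by omega) (by omega) (by omega)
    rcases Nat.eq_zero_or_pos ja with h0 | h0
    · have h2 : g x jb ≤ g x (2 * k + 1) :=
        good_mono hl hb hbgood (by omega) (by omega) (by omega)
      rw [g_total hl hc] at h2
      have h3 : g x ja = 0 := by rw [h0]; exact g_zero hl
      omega
    · have h2 : g x jb + 1 ≤ g x ja := good_wrap hl hc hb hbgood h0 hab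
      omega
  rcases lt_trichotomy j j' with h | h | h
  · exact absurd (key j j' h hj' hg hg') (by simp)
  · exact h
  · exact absurd (key j' j h hj hg' hg) (by simp)

/-- Existence part of the cycle lemma. -/
lemma good_exists : ∃ j < 2 * k + 1, Good k x j := by
  classical
  set n := 2 * k + 1 with hn
  have hne : ((Finset.range n).image (g x)).Nonempty := by
    refine ⟨g x 0, Finset.mem_image.2 ⟨0, Finset.mem_range.2 (by omega), rfl⟩⟩
  set M := ((Finset.range n).image (g x)).min' hne with hM
  have hMle : ∀ t < n, M ≤ g x t := fun t ht =>
    Finset.min'_le _ _ (Finset.mem_image.2 ⟨t, Finset.mem_range.2 ht, rfl⟩)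
  have hMmem : ∃ j, j < n ∧ g x j = M := by
    obtain ⟨j, hj, hje⟩ := Finset.mem_image.1 (((Finset.range n).image (g x)).min'_mem hne)
    exact ⟨j, Finset.mem_range.1 hj, hje⟩
  set j0 := Nat.find hMmem with hj0
  obtain ⟨hj0n, hj0M⟩ := Nat.find_spec hMmem
  have hmin : ∀ t < j0, M + 1 ≤ g x t := by
    intro t ht
    have h1 := Nat.find_min hMmem ht
    have h2 : t < n := by omega
    have h3 : g x t ≠ M := fun h => h1 ⟨h2, h⟩
    have := hMle t h2
    omega
  refine ⟨j0, hj0n, ?_⟩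
  intro m hm
  rcases le_or_gt (j0 + m) n with hle | hgt
  · rw [good_iff_le hl (by omega) (by omega), hj0M]
    rcases lt_or_eq_of_le hle with h | h
    · exact hMle _ h
    · rw [h, g_total hl hc]
      have hj0pos : 0 < j0 := by omega
      have := hmin 0 hj0pos
      have h0 := g_zero (x := x) hl
      omega
  · rw [good_iff_gt hl hc (by omega) (by omega) (by omega), hj0M]
    have h2 : j0 + m - n < j0 := by omega
    exact hmin _ h2

end cycle

/-- rotating back -/
lemma rotate_back {l : List Bool} {n i : ℕ} (hl : l.length = n) (hi : i < n) :
    (l.rotate i).rotate ((n - i) % n) = l := by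
  rw [List.rotate_rotate]
  rcases Nat.eq_zero_or_pos i with h0 | h0
  · subst h0; rw [Nat.sub_zero, Nat.mod_self, List.rotate_zero]
  · rw [Nat.mod_eq_of_lt (by omega)]
    have e : i + (n - i) = n := by omega
    rw [e, ← hl, List.rotate_length]

lemma good_of_concat {k : ℕ} {x y : List Bool} {j : ℕ} (hy : IsDyckWord k y)
    (hrot : x.rotate j = y ++ [false]) : Good k x j := by
  intro m hm
  rw [hrot, List.take_append]
  have h1 : m - y.length = 0 := by rw [hy.1]; omega
  rw [h1, List.take_zero, List.append_nil]
  exact hy.2.2 m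

lemma rep_of_good {k : ℕ} {x : List Bool} {j : ℕ} (hl : x.length = 2 * k + 1)
    (hc : x.count true = k) (hj : j < 2 * k + 1) (hg : Good k x j) :
    ∃ y, IsDyckWord k y ∧ x.rotate j = y ++ [false] := by
  set z := x.rotate j with hz
  have hzl : z.length = 2 * k + 1 := by rw [hz, List.length_rotate, hl]
  have hzc : z.count true = k := by rw [hz, (x.rotate_perm j).count_eq, hc]
  have hzf : z.count false = k + 1 := by have := count_add_length z; omega
  set y := z.take (2 * k) with hy
  have hyl : y.length = 2 * k := by rw [hy, List.length_take, hzl]; omega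
  have hsplit : y ++ z.drop (2 * k) = z := List.take_append_drop _ _
  have hdl : (z.drop (2 * k)).length = 1 := by rw [List.length_drop, hzl]; omega
  have hyt2 : z.count true = y.count true + (z.drop (2 * k)).count true := by
    conv_lhs => rw [← hsplit]
    exact List.count_append ..
  have hyf2 : z.count false = y.count false + (z.drop (2 * k)).count false := by
    conv_lhs => rw [← hsplit]
    exact List.count_append ..
  have hgy := hg (2 * k) (by omega)
  rw [← hy] at hgy
  have hysum := count_add_length y
  have hdsum := count_add_length (z.drop (2 * k))
  have hyt : y.count true = k := by omega
  have hyf : y.count false = k := by omega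
  have hdt : (z.drop (2 * k)).count true = 0 := by omega
  have hdrop : z.drop (2 * k) = [false] := by
    rcases List.length_eq_one_iff.mp hdl with ⟨a, ha⟩
    cases a
    · rw [ha]
    · rw [ha] at hdt; simp at hdt
  refine ⟨y, ⟨hyl, hyt, ?_⟩, by rw [← hsplit, hdrop]⟩
  intro m
  rw [hy, List.take_take]
  rcases le_or_gt m (2 * k) with h | h
  · rw [min_eq_left h]; exact hg m (by omega)
  · rw [min_eq_right (by omega)]; exact hg (2 * k) (by omega)

/-- A-existence -/
lemma repA_exists {k : ℕ} {x : List Bool} (hl : x.length = 2 * k + 1)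
    (hc : x.count true = k) :
    ∃ y i, IsDyckWord k y ∧ i < 2 * k + 1 ∧ x = (y ++ [false]).rotate i := by
  obtain ⟨j, hj, hg⟩ := good_exists hl hc
  obtain ⟨y, hy, hrot⟩ := rep_of_good hl hc hj hg
  refine ⟨y, (2 * k + 1 - j) % (2 * k + 1), hy, Nat.mod_lt _ (by omega), ?_⟩
  rw [← hrot, rotate_back hl hj]

/-- A-uniqueness -/
lemma repA_unique {k : ℕ} {y y' : List Bool} {i i' : ℕ}
    (hy : IsDyckWord k y) (hy' : IsDyckWord k y') (hi : i < 2 * k + 1) (hi' : i' < 2 * k + 1)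
    (heq : (y ++ [false]).rotate i = (y' ++ [false]).rotate i') : y = y' ∧ i = i' := by
  have hl1 : (y ++ [false]).length = 2 * k + 1 := by
    rw [List.length_append, hy.1]; simp
  have hl2 : (y' ++ [false]).length = 2 * k + 1 := by
    rw [List.length_append, hy'.1]; simp
  have hb1 : ((y ++ [false]).rotate i).rotate ((2 * k + 1 - i) % (2 * k + 1)) = y ++ [false] :=
    rotate_back hl1 hi
  have hb2 : ((y ++ [false]).rotate i).rotate ((2 * k + 1 - i') % (2 * k + 1)) = y' ++ [false] := by
    rw [heq]; exact rotate_back hl2 hi'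
  have hxl : ((y ++ [false]).rotate i).length = 2 * k + 1 := by rw [List.length_rotate, hl1]
  have hxc : ((y ++ [false]).rotate i).count true = k := by
    rw [((y ++ [false]).rotate_perm i).count_eq, List.count_append, hy.2.1]; simp
  have hg1 := good_of_concat hy hb1
  have hg2 := good_of_concat hy' hb2
  have hjj : (2 * k + 1 - i) % (2 * k + 1) = (2 * k + 1 - i') % (2 * k + 1) :=
    good_unique hxl hxc (Nat.mod_lt _ (by omega)) (Nat.mod_lt _ (by omega)) hg1 hg2
  have hii : i = i' := by
    have e : ∀ a, a < 2 * k + 1 →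
        (2 * k + 1 - a) % (2 * k + 1) = if a = 0 then 0 else 2 * k + 1 - a := by
      intro a ha
      rcases Nat.eq_zero_or_pos a with h0 | h0
      · simp [h0, Nat.mod_self]
      · rw [if_neg (by omega), Nat.mod_eq_of_lt (by omega)]
    rw [e i hi, e i' hi'] at hjj
    split_ifs at hjj <;> omega
  refine ⟨?_, hii⟩
  rw [hjj] at hb1
  have h3 := hb1.symm.trans hb2
  have := congrArg List.dropLast h3
  simpa using this

/-! ### reverse-complement -/

def rc (l : List Bool) : List Bool := (l.map not).reverse

@[simp] lemma rc_rc (l : List Bool) : rc (rc l) = l := by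
  simp [rc, Function.comp_def, Bool.not_not]

@[simp] lemma length_rc (l : List Bool) : (rc l).length = l.length := by simp [rc]

lemma count_rc (l : List Bool) (b : Bool) : (rc l).count b = l.count !b := by
  induction l with
  | nil => simp [rc]
  | cons a l ih =>
    simp only [rc, List.map_cons, List.reverse_cons] at *
    rw [List.count_append, ih]
    cases a <;> cases b <;> simp [List.count_cons]

lemma rc_append (l₁ l₂ : List Bool) : rc (l₁ ++ l₂) = rc l₂ ++ rc l₁ := by
  simp [rc]

lemma rc_rotate {l : List Bool} {j : ℕ} (hj : j ≤ l.length) :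
    rc (l.rotate j) = (rc l).rotate (l.length - j) := by
  rw [List.rotate_eq_drop_append_take hj, rc_append]
  have hrcl : rc l = rc (l.drop j) ++ rc (l.take j) := by
    rw [← rc_append, List.take_append_drop]
  rw [hrcl, List.rotate_eq_drop_append_take (by simp)]
  have h1 : (rc (l.drop j)).length = l.length - j := by simp
  rw [List.drop_left' h1, List.take_left' h1]

lemma rc_dyck {k : ℕ} {y : List Bool} (hy : IsDyckWord k y) : IsDyckWord k (rc y) := by
  obtain ⟨hl, hc, hp⟩ := hy
  have hcf : y.count false = k := by have := count_add_length y; omega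
  refine ⟨by simp [hl], by rw [count_rc]; simpa using hcf, ?_⟩
  intro m
  rcases le_or_gt m (2 * k) with hm | hm
  swap
  · have h : (rc y).take m = rc y := List.take_of_length_le (by simp [hl]; omega)
    rw [h, count_rc, count_rc]
    simp only [Bool.not_false, Bool.not_true]
    omega
  have key : (rc y).take m = rc (y.drop (2 * k - m)) := by
    have hsp : rc y = rc (y.drop (2 * k - m)) ++ rc (y.take (2 * k - m)) := by
      rw [← rc_append, List.take_append_drop]
    have h1 : (rc (y.drop (2 * k - m))).length = m := by simp [hl]; omega
    rw [hsp, List.take_left' h1]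
  rw [key, count_rc, count_rc]
  simp only [Bool.not_false, Bool.not_true]
  have e1 : y.count true
      = (y.take (2 * k - m)).count true + (y.drop (2 * k - m)).count true := by
    rw [← List.count_append, List.take_append_drop]
  have e2 : y.count false
      = (y.take (2 * k - m)).count false + (y.drop (2 * k - m)).count false := by
    rw [← List.count_append, List.take_append_drop]
  have := hp (2 * k - m)
  omega

/-- the index transform for the rc trick -/
lemma rc_rep {k : ℕ} {y : List Bool} (hy : y.length = 2 * k) {i : ℕ} (hi : i < 2 * k + 1) :
    rc ((y ++ [true]).rotate i) = (rc y ++ [false]).rotate (2 * k - i) := by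
  have hlen : (y ++ [true]).length = 2 * k + 1 := by simp [hy]
  rw [rc_rotate (by omega), hlen, rc_append]
  have h0 : rc [true] = [false] := by simp [rc]
  rw [h0]
  have h2 : (rc y).length = 2 * k := by simp [hy]
  have h1 : [false] ++ rc y = (rc y ++ [false]).rotate (2 * k) := by
    rw [List.rotate_eq_drop_append_take (by simp [hy]), List.drop_left' h2, List.take_left' h2]
  rw [h1, List.rotate_rotate]
  have h3 : (rc y ++ [false]).length = 2 * k + 1 := by simp [hy]
  rw [← List.rotate_mod, h3]
  congr 1
  have e : 2 * k + (2 * k + 1 - i) = (2 * k + 1) + (2 * k - i) := by omega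
  rw [e, Nat.add_mod_left, Nat.mod_eq_of_lt (by omega)]

/-- B-existence -/
lemma repB_exists {k : ℕ} {b : List Bool} (hl : b.length = 2 * k + 1)
    (hc : b.count true = k + 1) :
    ∃ y i, IsDyckWord k y ∧ i < 2 * k + 1 ∧ b = (y ++ [true]).rotate i := by
  have hrl : (rc b).length = 2 * k + 1 := by simp [hl]
  have hrc : (rc b).count true = k := by
    rw [count_rc]
    have := count_add_length b
    simp only [Bool.not_true]
    omega
  obtain ⟨y', j, hy', hj, hrep⟩ := repA_exists hrl hrc
  refine ⟨rc y', 2 * k - j, rc_dyck hy', by omega, ?_⟩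
  have hj2k : j ≤ 2 * k := by omega
  have hkey := rc_rep (k := k) (y := rc y') (by simp [hy'.1]) (i := 2 * k - j) (by omega)
  rw [rc_rc] at hkey
  have hj' : 2 * k - (2 * k - j) = j := by omega
  rw [hj'] at hkey
  have h4 : rc ((rc y' ++ [true]).rotate (2 * k - j)) = rc b := by rw [hkey, ← hrep]
  have h5 := congrArg rc h4
  rwa [rc_rc, rc_rc, eq_comm] at h5

/-- B-uniqueness -/
lemma repB_unique {k : ℕ} {y y' : List Bool} {i i' : ℕ}
    (hy : IsDyckWord k y) (hy' : IsDyckWord k y') (hi : i < 2 * k + 1) (hi' : i' < 2 * k + 1)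
    (heq : (y ++ [true]).rotate i = (y' ++ [true]).rotate i') : y = y' ∧ i = i' := by
  have h1 := rc_rep (k := k) hy.1 hi
  have h2 := rc_rep (k := k) hy'.1 hi'
  rw [heq] at h1
  have h3 : (rc y' ++ [false]).rotate (2 * k - i') = (rc y ++ [false]).rotate (2 * k - i) :=
    h2.symm.trans h1
  obtain ⟨e1, e2⟩ := repA_unique (rc_dyck hy') (rc_dyck hy) (by omega) (by omega) h3
  constructor
  · have := congrArg rc e1; rwa [rc_rc, rc_rc, eq_comm] at this
  · omega

open Classical in
/-- the bijection -/
noncomputable def KTf (k : ℕ) : List Bool → List Bool := fun x =>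
  if h : ∃ p : List Bool × ℕ,
      IsDyckWord k p.1 ∧ p.2 < 2 * k + 1 ∧ x = (p.1 ++ [false]).rotate p.2
  then (h.choose.1 ++ [true]).rotate h.choose.2 else []

lemma KTf_eq {k : ℕ} (y : List Bool) (i : ℕ) (hy : IsDyckWord k y) (hi : i < 2 * k + 1) :
    KTf k ((y ++ [false]).rotate i) = (y ++ [true]).rotate i := by
  have hex : ∃ p : List Bool × ℕ,
      IsDyckWord k p.1 ∧ p.2 < 2 * k + 1 ∧
        (y ++ [false]).rotate i = (p.1 ++ [false]).rotate p.2 := ⟨(y, i), hy, hi, rfl⟩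
  rw [KTf, dif_pos hex]
  obtain ⟨h1, h2, h3⟩ := hex.choose_spec
  obtain ⟨e1, e2⟩ := repA_unique h1 hy h2 hi h3.symm
  rw [e1, e2]

end KTaux

open KTaux in
/-- The map `f` sending `σ^i(y·0)` to `σ^i(y·1)` (for `y` a Dyck word of length `2*k` and
`0 ≤ i < 2*k+1`) is a bijection from the bitstrings of length `2*k+1` with `k` ones onto
those with `k+1` ones. -/
theorem kierstead_trotter_bijection (k : ℕ) :
    ∃ f : List Bool → List Bool,
      (∀ y : List Bool, ∀ i : ℕ, IsDyckWord k y → i < 2 * k + 1 →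
        f ((y ++ [false]).rotate i) = (y ++ [true]).rotate i) ∧
      Set.BijOn f {x : List Bool | x.length = 2 * k + 1 ∧ x.count true = k}
        {x : List Bool | x.length = 2 * k + 1 ∧ x.count true = k + 1} := by
  refine ⟨KTf k, fun y i hy hi => KTf_eq y i hy hi, ?_, ?_, ?_⟩
  · -- MapsTo
    rintro x ⟨hxl, hxc⟩
    obtain ⟨y, i, hy, hi, hrep⟩ := repA_exists hxl hxc
    have hfx : KTf k x = (y ++ [true]).rotate i := by rw [hrep]; exact KTf_eq y i hy hi
    constructor
    · rw [hfx, List.length_rotate, List.length_append, hy.1]; simp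
    · rw [hfx, ((y ++ [true]).rotate_perm i).count_eq, List.count_append, hy.2.1]; simp
  · -- InjOn
    rintro x1 ⟨hx1l, hx1c⟩ x2 ⟨hx2l, hx2c⟩ heq
    obtain ⟨y1, i1, hy1, hi1, hrep1⟩ := repA_exists hx1l hx1c
    obtain ⟨y2, i2, hy2, hi2, hrep2⟩ := repA_exists hx2l hx2c
    rw [hrep1, hrep2, KTf_eq y1 i1 hy1 hi1, KTf_eq y2 i2 hy2 hi2] at heq
    obtain ⟨e1, e2⟩ := repB_unique hy1 hy2 hi1 hi2 heq
    rw [hrep1, hrep2, e1, e2]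
  · -- SurjOn
    rintro b ⟨hbl, hbc⟩
    obtain ⟨y, i, hy, hi, hrep⟩ := repB_exists hbl hbc
    refine ⟨(y ++ [false]).rotate i, ⟨?_, ?_⟩, ?_⟩
    · rw [List.length_rotate, List.length_append, hy.1]; simp
    · rw [((y ++ [false]).rotate_perm i).count_eq, List.count_append, hy.2.1]; simp
    · rw [KTf_eq y i hy hi, ← hrep]
end

section
/- For every vertex x of the Kneser graph K_{n,k} (viewed as a bitstring of length n with k ones), the string f(x) obtained by cyclically matching 1s with closest 0s (parenthesis matching) and complementing all matched bits has no 1 in a common position with x; hence (x, f(x)) is an edge of the Kneser graph. -/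
/-- A balanced bitstring: equally many ones (`true`) and zeros (`false`), and every prefix
has at least as many ones as zeros (i.e. a fully matched parenthesis string). -/
def BalancedWord (l : List Bool) : Prop :=
  l.count true = l.count false ∧
    ∀ m : ℕ, (l.take m).count false ≤ (l.take m).count true

/-- In the cyclic parenthesis matching of the bitstring `x` (ones are opening brackets,
zeros are closing brackets, matched cyclically in the natural nested way), the `1` at
position `p` is matched with the `0` at position `q`: the cyclic segment of `x` strictly
between `p` and `q` is a fully matched (balanced) string. -/
def Matches (x : List Bool) (p q : ℕ) : Prop :=
  p < x.length ∧ q < x.length ∧ p ≠ q ∧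
    x.getD p false = true ∧ x.getD q true = false ∧
    BalancedWord ((x.rotate (p + 1)).take ((q + x.length - (p + 1)) % x.length))

lemma count_true_add_count_false (l : List Bool) :
    l.count true + l.count false = l.length := by
  induction l with
  | nil => simp
  | cons a l ih => cases a <;> simp [List.count_cons, ih] <;> omega

lemma exists_match (x : List Bool) (p : ℕ) (hp : p < x.length)
    (hxp : x.getD p false = true) (hc : x.count true < x.count false) :
    ∃ q, Matches x p q := by
  set n := x.length with hn
  set r := x.rotate (p + 1) with hr
  have hrlen : r.length = n := List.length_rotate x (p + 1)
  have hperm := List.rotate_perm x (p + 1)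
  have hct : r.count true = x.count true := hperm.count_eq true
  have hcf : r.count false = x.count false := hperm.count_eq false
  have hP : ∃ m, (r.take m).count true < (r.take m).count false := by
    refine ⟨n, ?_⟩
    rw [List.take_of_length_le hrlen.le, hct, hcf]; exact hc
  classical
  set m0 := Nat.find hP with hm0def
  have hspec := Nat.find_spec hP
  have hm0pos : 0 < m0 := by
    rcases Nat.eq_zero_or_pos m0 with h | h
    · exfalso; rw [← hm0def] at hspec; rw [h] at hspec; simp at hspec
    · exact h
  set m := m0 - 1 with hmdef
  have hm0eq : m0 = m + 1 := by omega
  have hm0le : m0 ≤ n := Nat.find_le (by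
    rw [List.take_of_length_le hrlen.le, hct, hcf]; exact hc)
  have hmlt : m < n := by omega
  have hmltr : m < r.length := by omega
  have hmin : ∀ i, i ≤ m → (r.take i).count false ≤ (r.take i).count true := by
    intro i hi
    have := Nat.find_min hP (show i < m0 by omega)
    omega
  have htake : r.take (m + 1) = r.take m ++ [r[m]] := by
    rw [List.take_succ, List.getElem?_eq_getElem hmltr]
    rfl
  have hcount1 : (r.take (m+1)).count true < (r.take (m+1)).count false := by
    rw [← hm0eq]; exact hspec
  have hrm : r[m] = false := by
    by_contra h
    have h' : r[m] = true := by simpa using h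
    rw [htake, h'] at hcount1
    simp [List.count_append] at hcount1
    have := hmin m le_rfl
    omega
  have hbal : BalancedWord (r.take m) := by
    constructor
    · rw [htake, hrm] at hcount1
      simp [List.count_append] at hcount1
      have := hmin m le_rfl
      omega
    · intro i
      rw [List.take_take]
      exact hmin _ (min_le_right _ _)
  set q := (p + 1 + m) % n with hqdef
  have hq : q < n := Nat.mod_lt _ (by omega)
  have hq' : q < x.length := by omega
  have hsome : x[q]? = some false := by
    have hidx : q = (m + (p + 1)) % x.length := by rw [hqdef, hn]; congr 1; omega
    rw [hidx, List.getElem?_eq_getElem (Nat.mod_lt _ (by omega)),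
      ← List.getElem_rotate x (p + 1) m hmltr, hrm]
  have hgd : ∀ d, x.getD q d = false := by
    intro d; rw [List.getD_eq_getElem?_getD, hsome]; rfl
  have hpq : p ≠ q := by
    intro h
    rw [h, hgd false] at hxp
    exact Bool.false_ne_true hxp
  have harith : (q + n - (p + 1)) % n = m := by
    by_cases hlt : p + 1 + m < n
    · have hq' : q = p + 1 + m := by rw [hqdef]; exact Nat.mod_eq_of_lt hlt
      have : q + n - (p + 1) = m + n := by omega
      rw [this, Nat.add_mod_right, Nat.mod_eq_of_lt hmlt]
    · have h1 : p + 1 + m - n < n := by omega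
      have hq' : q = p + 1 + m - n := by
        rw [hqdef, Nat.mod_eq_sub_mod (by omega), Nat.mod_eq_of_lt h1]
      have : q + n - (p + 1) = m := by omega
      rw [this, Nat.mod_eq_of_lt hmlt]
  refine ⟨q, hp, hq, hpq, hxp, ?_, ?_⟩
  · exact hgd true
  · rw [← hr, ← hn, harith]
    exact hbal

/-- Position `j` of `x` carries a matched bit of the cyclic parenthesis matching. -/
def IsMatchedPos (x : List Bool) (j : ℕ) : Prop :=
  (∃ q, Matches x j q) ∨ (∃ p, Matches x p j)

open scoped Classical in
/-- `parenMatchMap x` complements all matched bits of `x` and leaves unmatched bits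
unchanged. -/
noncomputable def parenMatchMap (x : List Bool) : List Bool :=
  (List.range x.length).map fun j =>
    if IsMatchedPos x j then !(x.getD j false) else x.getD j false

/-- For every vertex `x` of the Kneser graph `K_{n,k}` (a bitstring of length `n ≥ 2k+1`
with exactly `k` ones), the string obtained by complementing all cyclically matched bits
has no `1` in a common position with `x`; hence the corresponding two `k`-sets are
disjoint, i.e. they form an edge of the Kneser graph. -/
theorem parenthesis_matching_gives_kneser_edge (n k : ℕ) (hn : 2 * k + 1 ≤ n)
    (x : List Bool) (hlen : x.length = n) (hones : x.count true = k) :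
    {j : ℕ | x.getD j false = true} ∩
      {j : ℕ | (parenMatchMap x).getD j false = true} = ∅ := by
  ext j
  simp only [Set.mem_inter_iff, Set.mem_setOf_eq, Set.mem_empty_iff_false, iff_false, not_and]
  intro h1 h2
  by_cases hj : j < x.length
  · have hm : IsMatchedPos x j :=
      Or.inl (exists_match x j hj h1 (by
        have := count_true_add_count_false x
        omega))
    have hlen' : j < (parenMatchMap x).length := by
      simp only [parenMatchMap, List.length_map, List.length_range]; exact hj
    have h1' : x[j] = true := by
      rw [← List.getD_eq_getElem x false hj]; exact h1
    have : (parenMatchMap x).getD j false = false := by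
      rw [List.getD_eq_getElem _ false hlen']
      simp only [parenMatchMap, List.getElem_map, List.getElem_range]
      simp [hm, List.getD_eq_getElem?_getD, List.getElem?_eq_getElem hj, h1']
    rw [this] at h2
    exact Bool.false_ne_true h2
  · rw [List.getD_eq_default _ _ (by omega)] at h1
    exact Bool.false_ne_true h1
end

section
/- The Petersen graph, realized as the Kneser graph K_{5,2}, has no Hamilton cycle. -/
/-- The Kneser graph `K_{n,k}`: vertices are the `k`-element subsets of an `n`-set,
with edges between disjoint sets. `K_{5,2}` is the Petersen graph. -/
def kneserGraph (n k : ℕ) : SimpleGraph {A : Finset (Fin n) // A.card = k} where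
  Adj A B := A ≠ B ∧ Disjoint A.1 B.1
  symm := ⟨fun _ _ h => ⟨h.1.symm, h.2.symm⟩⟩
  loopless := ⟨fun _ h => h.1 rfl⟩

namespace PetersenAux

abbrev V := {A : Finset (Fin 5) // A.card = 2}

def pAdj (a b : V) : Bool := decide (a ≠ b) && decide (Disjoint a.1 b.1)

lemma pAdj_iff (a b : V) : pAdj a b = true ↔ (kneserGraph 5 2).Adj a b := by
  simp [pAdj, kneserGraph]

def allV : List V :=
  [⟨{0,1}, by decide⟩, ⟨{0,2}, by decide⟩, ⟨{0,3}, by decide⟩, ⟨{0,4}, by decide⟩,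
   ⟨{1,2}, by decide⟩, ⟨{1,3}, by decide⟩, ⟨{1,4}, by decide⟩,
   ⟨{2,3}, by decide⟩, ⟨{2,4}, by decide⟩, ⟨{3,4}, by decide⟩]

lemma mem_allV : ∀ v : V, v ∈ allV := by decide

def exts (p : List V) : List (List V) :=
  match p with
  | [] => []
  | h :: _ => (allV.filter (fun w => pAdj w h && !(decide (w ∈ p)))).map (· :: p)

def closeB (F : List V) : Bool :=
  match F.head?, F.getLast? with
  | some h, some g => pAdj h g
  | _, _ => false

def search : ℕ → List V → List (List V)
  | 0, p => if closeB p then [p] else []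
  | n+1, p => (exts p).flatMap (search n)

lemma mem_search : ∀ (l p : List V), p ≠ [] → (l ++ p).Nodup →
    (l ++ p).Chain' (fun a b => pAdj a b = true) → closeB (l ++ p) = true →
    (l ++ p) ∈ search l.length p := by
  intro l
  induction l using List.reverseRecOn with
  | nil =>
    intro p hp nd ch cl
    simp only [List.nil_append] at *
    simp [search, cl]
  | append_singleton l' b ih =>
    intro p hp nd ch cl
    have hre : (l' ++ [b]) ++ p = l' ++ (b :: p) := by simp
    rw [hre] at nd ch cl ⊢
    have hlen : (l' ++ [b]).length = l'.length + 1 := by simp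
    rw [hlen]
    obtain ⟨h, t, rfl⟩ : ∃ h t, p = h :: t := by
      cases p with
      | nil => exact absurd rfl hp
      | cons h t => exact ⟨h, t, rfl⟩
    have hmem : (b :: h :: t) ∈ exts (h :: t) := by
      have hch2 : (b :: h :: t).Chain' (fun a b => pAdj a b = true) :=
        ((List.isChain_append.mp ch).2.1)
      have hadj : pAdj b h = true := (List.isChain_cons_cons.mp hch2).1
      have hnd2 : (b :: h :: t).Nodup :=
        nd.sublist (List.sublist_append_right l' (b :: h :: t))
      have hbn : b ∉ (h :: t) := (List.nodup_cons.mp hnd2).1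
      simp only [exts, List.mem_map, List.mem_filter]
      exact ⟨b, ⟨mem_allV b, by simp [hadj, hbn]⟩, rfl⟩
    have := ih (b :: h :: t) (by simp) nd ch cl
    simp only [search, List.mem_flatMap]
    exact ⟨b :: h :: t, hmem, this⟩

lemma search_empty : ∀ v ∈ allV, search 9 [v] = [] := by decide

end PetersenAux

open PetersenAux in
/-- The Petersen graph `K_{5,2}` has no Hamilton cycle. -/
theorem petersen_not_hamiltonian : ¬ (kneserGraph 5 2).IsHamiltonian := by
  intro h
  have hcard : Fintype.card V = 10 := by decide
  obtain ⟨a, p, hp⟩ := h (by rw [hcard]; omega)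
  have hnotnil := hp.isCycle.not_nil
  have hTs : p.tail.support = p.support.tail := p.support_tail_of_not_nil hnotnil
  have hTlen : p.support.tail.length = 10 := by
    rw [← hTs, SimpleGraph.Walk.length_support, hp.isHamiltonian_tail.length_eq, hcard]
  have hTne : p.support.tail ≠ [] := by
    intro h0; rw [h0] at hTlen; simp at hTlen
  have hnd : p.support.tail.Nodup := hp.isCycle.support_nodup
  have hsupp : p.support = a :: p.support.tail := p.support_eq_cons
  have hch0 : p.support.Chain' (fun a b => pAdj a b = true) :=
    (p.isChain_adj_support).imp (fun a b hab => (pAdj_iff a b).mpr hab)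
  revert hTlen hTne hnd hch0 hsupp
  generalize p.support.tail = T
  intro hTlen hTne hnd hsupp hch0
  have hchT : T.Chain' (fun a b => pAdj a b = true) := by
    have := hch0.tail; rwa [hsupp, List.tail_cons] at this
  have hlastq : p.support.getLast? = some a := by
    rw [List.getLast?_eq_getLast (SimpleGraph.Walk.support_ne_nil p), p.getLast_support]
  have hlastq' : T.getLast? = some a := by
    obtain ⟨h1, t1, rfl⟩ : ∃ h1 t1, T = h1 :: t1 := by
      cases T with
      | nil => exact absurd rfl hTne
      | cons h1 t1 => exact ⟨h1, t1, rfl⟩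
    rw [hsupp, List.getLast?_cons_cons] at hlastq
    exact hlastq
  have hlast : T.getLast hTne = a := by
    rw [List.getLast?_eq_getLast hTne] at hlastq'
    exact Option.some_injective _ hlastq'
  have hcl : closeB T = true := by
    obtain ⟨h1, t1, rfl⟩ : ∃ h1 t1, T = h1 :: t1 := by
      cases T with
      | nil => exact absurd rfl hTne
      | cons h1 t1 => exact ⟨h1, t1, rfl⟩
    have hadjah : pAdj a h1 = true := by
      rw [hsupp] at hch0
      exact (List.isChain_cons_cons.mp hch0).1
    have hadjh : pAdj h1 a = true := by
      rw [pAdj_iff] at hadjah ⊢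
      exact hadjah.symm
    simp only [closeB, List.head?_cons]
    rw [hlastq']
    exact hadjh
  have hdec : T.dropLast ++ [a] = T := by
    conv_rhs => rw [← List.dropLast_append_getLast hTne]
    rw [hlast]
  have hdlen : T.dropLast.length = 9 := by
    rw [List.length_dropLast, hTlen]
  have hmem := mem_search T.dropLast [a] (by simp) (by rw [hdec]; exact hnd)
      (by rw [hdec]; exact hchT) (by rw [hdec]; exact hcl)
  rw [hdec, hdlen, search_empty a (mem_allV a)] at hmem
  exact absurd hmem (List.not_mem_nil (a := T))
end

section
/- The independence number of the Kneser graph K_{n,k} is binomial(n−1, k−1) (Erdős–Ko–Rado theorem), for n ≥ 2k. -/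
/-- Erdős–Ko–Rado theorem: for `n ≥ 2k`, the independence number of the Kneser graph
`K_{n,k}` is `binomial(n-1, k-1)`: it is the largest size of a set of vertices with no
edges between them (a family of pairwise intersecting `k`-sets). -/
theorem kneser_independence_number (n k : ℕ) (h : 2 * k ≤ n) :
    IsGreatest {m : ℕ | ∃ S : Finset {A : Finset (Fin n) // A.card = k},
        S.card = m ∧ ∀ x ∈ S, ∀ y ∈ S, ¬ (kneserGraph n k).Adj x y}
      ((n - 1).choose (k - 1)) := by
  constructor
  · -- membership: the star family achieves the bound
    rcases Nat.eq_zero_or_pos k with rfl | hk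
    · refine ⟨{⟨∅, Finset.card_empty⟩}, ?_, ?_⟩
      · simp
      · intro x hx y hy
        simp only [Finset.mem_singleton] at hx hy
        subst hx; subst hy
        exact fun hadj => hadj.1 rfl
    · have hn : 0 < n := by omega
      haveI : NeZero n := ⟨by omega⟩
      set z : Fin n := ⟨0, hn⟩
      refine ⟨Finset.univ.filter (fun A => z ∈ A.1), ?_, ?_⟩
      · have hce : (Finset.univ.erase z).card = n - 1 := by
          rw [Finset.card_erase_of_mem (Finset.mem_univ z)]
          simp
        rw [← hce, ← Finset.card_powersetCard (k - 1) (Finset.univ.erase z)]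
        apply Finset.card_bij (fun A _ => A.1.erase z)
        · intro A hA
          simp only [Finset.mem_filter] at hA
          rw [Finset.mem_powersetCard]
          constructor
          · intro x hx
            rw [Finset.mem_erase] at hx ⊢
            exact ⟨hx.1, Finset.mem_univ x⟩
          · rw [Finset.card_erase_of_mem hA.2, A.2]
        · intro A hA B hB hAB
          simp only [Finset.mem_filter] at hA hB
          ext1
          rw [← Finset.insert_erase hA.2, ← Finset.insert_erase hB.2, hAB]
        · intro B hB
          rw [Finset.mem_powersetCard] at hB
          have hzB : z ∉ B := fun hz => (Finset.mem_erase.mp (hB.1 hz)).1 rfl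
          have hcard : (insert z B).card = k := by
            rw [Finset.card_insert_of_notMem hzB, hB.2]; omega
          refine ⟨⟨insert z B, hcard⟩, ?_, ?_⟩
          · simp [Finset.mem_insert]
          · simp [Finset.erase_insert hzB]
      · intro x hx y hy hadj
        simp only [Finset.mem_filter] at hx hy
        exact Finset.not_disjoint_iff.mpr ⟨z, hx.2, hy.2⟩ hadj.2
  · -- upper bound
    rintro m ⟨S, rfl, hS⟩
    rcases Nat.eq_zero_or_pos k with rfl | hk
    · have : S.card ≤ 1 := Finset.card_le_one.mpr (by
        intro a ha b hb
        ext1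
        rw [Finset.card_eq_zero.mp a.2, Finset.card_eq_zero.mp b.2])
      simpa using this
    · have hcard : (S.image Subtype.val).card = S.card :=
        Finset.card_image_of_injective _ Subtype.val_injective
      rw [← hcard]
      apply Finset.erdos_ko_rado
      · intro a ha b hb hd
        simp only [Finset.coe_image, Set.mem_image, Finset.mem_coe] at ha hb
        obtain ⟨A, hA, rfl⟩ := ha
        obtain ⟨B, hB, rfl⟩ := hb
        by_cases hab : A = B
        · subst hab
          have : (A : Finset (Fin n)) = ∅ := (Finset.disjoint_self_iff_empty _).mp hd
          rw [← A.2, this] at hk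
          simp at hk
        · exact hS A hA B hB ⟨hab, hd⟩
      · intro a ha
        simp only [Finset.coe_image, Set.mem_image, Finset.mem_coe] at ha
        obtain ⟨A, _, rfl⟩ := ha
        simpa using A.2
      · omega
end
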